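/- For every d-dimensional sand automaton, P-surjectivity implies surjectivity: if every periodic configuration has a periodic preimage under the global function f, then every configuration has a preimage under f. -/

import Mathlib

/-- The extended integers `ℤ ∪ {-∞, +∞}`. -/
abbrev EZ : Type := WithBot (WithTop ℤ)

/-- Embedding of `ℤ` into the extended integers. -/
def finVal (n : ℤ) : EZ := ((n : WithTop ℤ) : EZ)

/-- The integer value of a finite extended integer (`0` on `±∞`). -/
def valZ (x : EZ) : ℤ := WithBot.recBotCoe 0 (fun y => WithTop.recTopCoe 0 id y) x

/-- The measuring device `β_l^m`. -/
noncomputable def beta (l : ℕ) (m : ℤ) (n : EZ) : EZ :=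
  if finVal (m + (l : ℤ)) < n then ⊤
  else if n < finVal (m - (l : ℤ)) then ⊥
  else WithBot.map (WithTop.map (fun k => k - m)) n

/-- Reference height: the value of `x` if finite, `0` if `x = ±∞`. -/
def refH (x : EZ) : ℤ := if x = ⊥ ∨ x = ⊤ then 0 else valZ x

/-- `d`-dimensional sandpile configurations. -/
def ConfigD (d : ℕ) : Type := (Fin d → ℤ) → EZ

/-- The index set of a `d`-dimensional neighborhood of radius `r`: the nonzero
vectors `v ∈ [-r, r]^d`. -/
def NIdx (d r : ℕ) : Type := {v : Fin d → ℤ // (∀ j, |v j| ≤ (r : ℤ)) ∧ v ≠ 0}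

/-- The neighborhood tuple `d_r^i(c) = (β_r^{c_i}(c_{i+v}))_{v ∈ [-r,r]^d, v ≠ 0}`
(with reference height `0` when `c_i = ±∞`). -/
noncomputable def nbhdD (d r : ℕ) (c : ConfigD d) (i : Fin d → ℤ) : NIdx d r → EZ :=
  fun v => beta r (refH (c i)) (c (fun t => i t + v.1 t))

/-- The global function of the `d`-dimensional sand automaton of radius `r`
with local rule `lam`. -/
noncomputable def globalD (d r : ℕ) (lam : (NIdx d r → EZ) → ℤ) (c : ConfigD d) : ConfigD d :=
  fun i => if c i = ⊥ ∨ c i = ⊤ then c i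
    else finVal (valZ (c i) + lam (nbhdD d r c i))

/-- Finite `d`-dimensional configurations: `c_i = 0` whenever the infinity norm
`|i| = max_j |i_j|` is at least some `k`. -/
def FiniteD {d : ℕ} (c : ConfigD d) : Prop :=
  ∃ k : ℕ, ∀ i : Fin d → ℤ, (∃ j, (k : ℤ) ≤ |i j|) → c i = finVal 0

/-- Periodic `d`-dimensional configurations: invariant under translation by `p · e_j`
for some integer `p ≥ 1` and every standard basis vector `e_j`. -/
def PeriodicD {d : ℕ} (c : ConfigD d) : Prop :=
  ∃ p : ℤ, 1 ≤ p ∧ ∀ (i : Fin d → ℤ) (j : Fin d),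
    c (fun t => i t + if t = j then p else 0) = c i

/-! A compactness argument. With the order topology, `ℤ ∪ {±∞}` is compact, so configurations
form a compact Hausdorff space. Since the local rule moves a finite height by a bounded amount,
the global function is continuous: at a finite site the measured neighbourhood is locally constant
(heights beyond `m ± r` are all read as `±∞`), and near `±∞` the image stays near `±∞`. Folding a
configuration `c` into the box `[-n, n]^d` gives periodic configurations converging to `c`, and a
cluster point of their periodic preimages is a preimage of `c`. -/

open Filter Topology

lemma finVal_ne_bot (k : ℤ) : finVal k ≠ ⊥ := WithBot.coe_ne_bot

lemma finVal_ne_top (k : ℤ) : finVal k ≠ ⊤ := by simp [finVal]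

lemma finVal_lt_top (k : ℤ) : finVal k < ⊤ := lt_top_iff_ne_top.2 (finVal_ne_top k)

lemma bot_lt_finVal (k : ℤ) : ⊥ < finVal k := bot_lt_iff_ne_bot.2 (finVal_ne_bot k)

@[simp]
lemma finVal_le_finVal {a b : ℤ} : finVal a ≤ finVal b ↔ a ≤ b :=
  WithBot.coe_le_coe.trans WithTop.coe_le_coe

@[simp]
lemma finVal_lt_finVal {a b : ℤ} : finVal a < finVal b ↔ a < b :=
  WithBot.coe_lt_coe.trans WithTop.coe_lt_coe

@[simp]
lemma finVal_inj {a b : ℤ} : finVal a = finVal b ↔ a = b :=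
  WithBot.coe_inj.trans WithTop.coe_inj

@[simp]
lemma valZ_finVal (k : ℤ) : valZ (finVal k) = k := rfl

lemma refH_finVal (k : ℤ) : refH (finVal k) = k := by
  simp [refH, finVal_ne_bot, finVal_ne_top]

lemma EZ.cases (z : EZ) : z = ⊥ ∨ z = ⊤ ∨ ∃ k, z = finVal k := by
  induction z using WithBot.recBotCoe with
  | bot => exact Or.inl rfl
  | coe w => induction w using WithTop.recTopCoe with
    | top => exact Or.inr (Or.inl rfl)
    | coe k => exact Or.inr (Or.inr ⟨k, rfl⟩)

lemma eventually_eq_finVal (k : ℤ) : ∀ᶠ z in 𝓝 (finVal k), z = finVal k := by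
  filter_upwards [Ioo_mem_nhds (finVal_lt_finVal.2 (sub_one_lt k))
    (finVal_lt_finVal.2 (lt_add_one k))] with z ⟨hlo, hhi⟩
  rcases EZ.cases z with rfl | rfl | ⟨m, rfl⟩
  · exact absurd hlo not_lt_bot
  · exact absurd hhi not_top_lt
  · simp only [finVal_lt_finVal, finVal_inj] at hlo hhi ⊢
    omega

lemma beta_of_gt {l : ℕ} {m : ℤ} {n : EZ} (h : finVal (m + l) < n) : beta l m n = ⊤ :=
  if_pos h

lemma beta_of_lt {l : ℕ} {m : ℤ} {n : EZ} (h : n < finVal (m - l)) : beta l m n = ⊥ := by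
  have hle : n ≤ finVal (m + l) := h.le.trans (finVal_le_finVal.2 (by omega))
  rw [beta, if_neg hle.not_gt, if_pos h]

lemma eventually_beta_eq (l : ℕ) (m : ℤ) (y : EZ) : ∀ᶠ z in 𝓝 y, beta l m z = beta l m y := by
  rcases EZ.cases y with rfl | rfl | ⟨k, rfl⟩
  · filter_upwards [eventually_lt_nhds (bot_lt_finVal (m - l))] with z hz
    rw [beta_of_lt hz, beta_of_lt (bot_lt_finVal _)]
  · filter_upwards [eventually_gt_nhds (finVal_lt_top (m + l))] with z hz
    rw [beta_of_gt hz, beta_of_gt (finVal_lt_top _)]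
  · filter_upwards [eventually_eq_finVal k] with z hz
    rw [hz]

instance (d r : ℕ) : Finite (NIdx d r) :=
  Set.Finite.to_subtype <| (Set.Finite.pi' fun _ => Set.finite_Icc (-(r : ℤ)) r).subset
    fun _ hv j => abs_le.1 (hv.1 j)

noncomputable instance (d : ℕ) : TopologicalSpace (ConfigD d) := Pi.topologicalSpace

instance (d : ℕ) : CompactSpace (ConfigD d) := Function.compactSpace

instance (d : ℕ) : T2Space (ConfigD d) := Pi.t2Space

lemma eventually_nhds_apply {d : ℕ} {x : ConfigD d} (i : Fin d → ℤ) {p : EZ → Prop}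
    (h : ∀ᶠ z in 𝓝 (x i), p z) : ∀ᶠ y in 𝓝 x, p (y i) :=
  ((continuous_apply i).tendsto x).eventually h

section globalD

variable {d r : ℕ} {lam : (NIdx d r → EZ) → ℤ} {x : ConfigD d} {i : Fin d → ℤ}

lemma globalD_apply_of_eq_finVal {k : ℤ} (h : x i = finVal k) :
    globalD d r lam x i = finVal (k + lam (nbhdD d r x i)) := by
  simp [globalD, h, finVal_ne_bot, finVal_ne_top]

lemma globalD_apply_of_eq_top (h : x i = ⊤) : globalD d r lam x i = ⊤ := by
  simp [globalD, h]

lemma globalD_apply_of_eq_bot (h : x i = ⊥) : globalD d r lam x i = ⊥ := by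
  simp [globalD, h]

lemma finVal_lt_globalD_apply {B m : ℤ} (hB : ∀ v, |lam v| ≤ B) (h : finVal (m + B) < x i) :
    finVal m < globalD d r lam x i := by
  rcases EZ.cases (x i) with hx | hx | ⟨k, hx⟩
  · exact absurd (hx ▸ h) not_lt_bot
  · exact (globalD_apply_of_eq_top hx).symm ▸ finVal_lt_top m
  · rw [globalD_apply_of_eq_finVal hx, finVal_lt_finVal]
    rw [hx, finVal_lt_finVal] at h
    linarith [(abs_le.1 (hB (nbhdD d r x i))).1]

lemma globalD_apply_lt_finVal {B m : ℤ} (hB : ∀ v, |lam v| ≤ B) (h : x i < finVal (m - B)) :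
    globalD d r lam x i < finVal m := by
  rcases EZ.cases (x i) with hx | hx | ⟨k, hx⟩
  · exact (globalD_apply_of_eq_bot hx).symm ▸ bot_lt_finVal m
  · exact absurd (hx ▸ h) not_top_lt
  · rw [globalD_apply_of_eq_finVal hx, finVal_lt_finVal]
    rw [hx, finVal_lt_finVal] at h
    linarith [(abs_le.1 (hB (nbhdD d r x i))).2]

lemma globalD_apply_eventuallyEq {k : ℤ} (hc : x i = finVal k) :
    (fun y => globalD d r lam y i) =ᶠ[𝓝 x] fun _ => globalD d r lam x i := by
  have hi : ∀ᶠ y in 𝓝 x, y i = finVal k :=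
    eventually_nhds_apply (p := (· = finVal k)) i (hc ▸ eventually_eq_finVal k)
  have hnbhd : ∀ᶠ y in 𝓝 x, ∀ v : NIdx d r,
      beta r k (y fun t => i t + v.1 t) = beta r k (x fun t => i t + v.1 t) :=
    eventually_all.2 fun v => eventually_nhds_apply _ (eventually_beta_eq _ _ _)
  filter_upwards [hi, hnbhd] with y hyi hy
  have : nbhdD d r y i = nbhdD d r x i := funext fun v => by
    simp only [nbhdD, hyi, hc, refH_finVal, hy]
  rw [globalD_apply_of_eq_finVal hyi, globalD_apply_of_eq_finVal hc, this]

lemma tendsto_globalD_apply_of_eq_top {B : ℤ} (hB : ∀ v, |lam v| ≤ B) (hc : x i = ⊤) :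
    Tendsto (fun y => globalD d r lam y i) (𝓝 x) (𝓝 ⊤) := by
  refine tendsto_order.2 ⟨fun a ha => ?_, fun a ha => absurd ha not_top_lt⟩
  obtain ⟨m, ham⟩ : ∃ m, a ≤ finVal m := by
    rcases EZ.cases a with rfl | rfl | ⟨m, rfl⟩
    exacts [⟨0, bot_le⟩, absurd ha (lt_irrefl _), ⟨m, le_rfl⟩]
  have hxi : ∀ᶠ y in 𝓝 x, finVal (m + B) < y i :=
    eventually_nhds_apply i (hc ▸ eventually_gt_nhds (finVal_lt_top _))
  filter_upwards [hxi] with y hy using ham.trans_lt (finVal_lt_globalD_apply hB hy)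

lemma tendsto_globalD_apply_of_eq_bot {B : ℤ} (hB : ∀ v, |lam v| ≤ B) (hc : x i = ⊥) :
    Tendsto (fun y => globalD d r lam y i) (𝓝 x) (𝓝 ⊥) := by
  refine tendsto_order.2 ⟨fun a ha => absurd ha not_lt_bot, fun a ha => ?_⟩
  obtain ⟨m, ham⟩ : ∃ m, finVal m ≤ a := by
    rcases EZ.cases a with rfl | rfl | ⟨m, rfl⟩
    exacts [absurd ha (lt_irrefl _), ⟨0, le_top⟩, ⟨m, le_rfl⟩]
  have hxi : ∀ᶠ y in 𝓝 x, y i < finVal (m - B) :=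
    eventually_nhds_apply i (hc ▸ eventually_lt_nhds (bot_lt_finVal _))
  filter_upwards [hxi] with y hy using (globalD_apply_lt_finVal hB hy).trans_le ham

lemma continuous_globalD {B : ℤ} (hB : ∀ v, |lam v| ≤ B) : Continuous (globalD d r lam) := by
  refine continuous_pi fun i => continuous_iff_continuousAt.2 fun x => ?_
  rcases EZ.cases (x i) with hc | hc | ⟨k, hc⟩
  · simpa only [ContinuousAt, globalD_apply_of_eq_bot hc] using
      tendsto_globalD_apply_of_eq_bot hB hc
  · simpa only [ContinuousAt, globalD_apply_of_eq_top hc] using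
      tendsto_globalD_apply_of_eq_top hB hc
  · exact continuousAt_const.congr (globalD_apply_eventuallyEq hc).symm

end globalD

section periodicApprox

variable {d : ℕ}

noncomputable def periodicApprox (c : ConfigD d) (n : ℕ) : ConfigD d :=
  fun i => c fun t => toIcoMod (by positivity : (0 : ℤ) < 2 * n + 1) (-n) (i t)

lemma periodicD_periodicApprox (c : ConfigD d) (n : ℕ) : PeriodicD (periodicApprox c n) := by
  refine ⟨2 * n + 1, by omega, fun i j => congrArg c (funext fun t => ?_)⟩
  dsimp only
  split_ifs
  exacts [toIcoMod_add_right _ _ _, by rw [add_zero]]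

lemma periodicApprox_apply {c : ConfigD d} {n : ℕ} {i : Fin d → ℤ} (hi : ∀ t, |i t| ≤ n) :
    periodicApprox c n i = c i :=
  congrArg c (funext fun t => (toIcoMod_eq_self _).2
    ⟨(abs_le.1 (hi t)).1, by linarith [(abs_le.1 (hi t)).2]⟩)

lemma tendsto_periodicApprox (c : ConfigD d) : Tendsto (periodicApprox c) atTop (𝓝 c) :=
  tendsto_pi_nhds.2 fun i => tendsto_const_nhds.congr' <| by
    filter_upwards [eventually_all.2 fun t => eventually_ge_atTop (i t).natAbs] with n hn
    exact (periodicApprox_apply fun t => Int.abs_eq_natAbs (i t) ▸ by exact_mod_cast hn t).symm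

end periodicApprox

theorem P_surjective_implies_surjective_general
    (d r : ℕ)
    (lam : (NIdx d r → EZ) → ℤ)
    (hlam : ∀ v, -(r : ℤ) ≤ lam v ∧ lam v ≤ (r : ℤ))
    (hPsurj : ∀ c : ConfigD d, PeriodicD c → ∃ c', PeriodicD c' ∧ globalD d r lam c' = c) :
    Function.Surjective (globalD d r lam) := by
  intro c
  choose E _ hE using fun n => hPsurj _ (periodicD_periodicApprox c n)
  obtain ⟨e, he⟩ : ∃ e, MapClusterPt e atTop E := exists_clusterPt_of_compactSpace _
  have hfe : MapClusterPt (globalD d r lam e) atTop (periodicApprox c) := by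
    simpa only [Function.comp_def, hE] using
      he.continuousAt_comp (continuous_globalD fun v => abs_le.2 (hlam v)).continuousAt
  exact ⟨e, eq_of_nhds_neBot (ClusterPt.mono hfe (tendsto_periodicApprox c))⟩

/-- For every `d`-dimensional sand automaton (dimension `d ≥ 1`, radius `r ≥ 1`, local
rule `lam` taking values in `[-r, r]`), `P`-surjectivity implies surjectivity: if every
periodic configuration has a periodic preimage under the global function, then every
configuration has a preimage. -/
theorem P_surjective_implies_surjective
    (d r : ℕ) (hd : 1 ≤ d) (hr : 1 ≤ r)
    (lam : (NIdx d r → EZ) → ℤ)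
    (hlam : ∀ v, -(r : ℤ) ≤ lam v ∧ lam v ≤ (r : ℤ))
    (hPsurj : ∀ c : ConfigD d, PeriodicD c → ∃ c', PeriodicD c' ∧ globalD d r lam c' = c) :
    Function.Surjective (globalD d r lam) :=
  P_surjective_implies_surjective_general d r lam hlam hPsurj
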